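/- Let U = {(x,y,p,q) ∈ ℝ⁴ : p ≠ 0 and p q < 1}. Then the smooth function F : U → ℝ defined by F(x,y,p,q) = [ p q (−12 + 3 p q − 8 √(1 − p q)) + 8 (1 + √(1 − p q)) ] / p³ satisfies both the Wuenschmann condition A = F_y + D(K) − (2/3) F_q K ≡ 0 and the Cartan condition G = D(D(F_{qq})) − D(F_{qp}) + F_{qy} ≡ 0 on U, where D = ∂_x + p ∂_y + q ∂_p + F ∂_q and K = (1/6) D(F_q) − (1/9) F_q² − (1/2) F_p. -/

import Mathlib

noncomputable section

/-- Points of the second jet space: coordinates `(x, y, p, q)`. -/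
abbrev V4 : Type := ℝ × ℝ × ℝ × ℝ

/-- Directional (partial) derivative of `f` at `m` in the constant direction `v`. -/
def pd (v : V4) (f : V4 → ℝ) (m : V4) : ℝ := fderiv ℝ f m v

def ex : V4 := (1, 0, 0, 0)
def ey : V4 := (0, 1, 0, 0)
def ep : V4 := (0, 0, 1, 0)
def eq' : V4 := (0, 0, 0, 1)

/-- The total derivative operator `(Dh)(m) = h_x + p h_y + q h_p + F h_q`. -/
def Dtot (F : V4 → ℝ) (h : V4 → ℝ) (m : V4) : ℝ :=
  pd ex h m + m.2.2.1 * pd ey h m + m.2.2.2 * pd ep h m + F m * pd eq' h m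

/-- `K = (1/6) D(F_q) − (1/9) F_q² − (1/2) F_p`. -/
def Kf (F : V4 → ℝ) (m : V4) : ℝ :=
  (1/6) * Dtot F (pd eq' F) m - (1/9) * (pd eq' F m)^2 - (1/2) * pd ep F m

/-- The Wuenschmann expression `A = F_y + D(K) − (2/3) F_q K`. -/
def Wu (F : V4 → ℝ) (m : V4) : ℝ :=
  pd ey F m + Dtot F (Kf F) m - (2/3) * pd eq' F m * Kf F m

/-- The Cartan expression `G = D(D(F_{qq})) − D(F_{qp}) + F_{qy}`. -/
def CartanG (F : V4 → ℝ) (m : V4) : ℝ :=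
  Dtot F (Dtot F (pd eq' (pd eq' F))) m - Dtot F (pd ep (pd eq' F)) m +
    pd ey (pd eq' F) m

/-!
With `s = √(1 - p q)` and `w = (1 + s) / p`, a root of `p w² - 2 w + q = 0`, one has
`w_q = -1 / (2 s)` and `w_p = w² w_q`, while `F = 3 p w⁴ - 4 w³`. Hence every derivative of `F`
is rational in `p`, `w`, `s`: `F_q = -6 w²`, `F_p = -3 w⁴`, `F_qq = 6 w / s`, `F_qp = 6 w³ / s`.
As `F` does not depend on `x, y`, the operator `D` acts as `q ∂_p + F ∂_q`, and substituting
`q = 2 w - p w²` gives `D(F_q) = 12 w⁴`, so `K = -w⁴ / 2` and `D(K) = 2 w⁶ = (2/3) F_q K`, i.e.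
`A = 0`. Likewise `D(F_qq) = F_qp` on `U`, so `G = D(D(F_qq) - F_qp) + F_qy = 0`.
-/

theorem HasFDerivAt.inv {E : Type*} [NormedAddCommGroup E] [NormedSpace ℝ E] {f : E → ℝ}
    {f' : E →L[ℝ] ℝ} {x : E} (hf : HasFDerivAt f f' x) (hx : f x ≠ 0) :
    HasFDerivAt (fun y => (f y)⁻¹) (-(f x ^ 2)⁻¹ • f') x :=
  (hasDerivAt_inv hx).comp_hasFDerivAt x hf

namespace DKPExample

open Set

def projP : V4 →L[ℝ] ℝ :=
  (ContinuousLinearMap.fst ℝ ℝ ℝ).comp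
    ((ContinuousLinearMap.snd ℝ ℝ (ℝ × ℝ)).comp (ContinuousLinearMap.snd ℝ ℝ (ℝ × ℝ × ℝ)))

def projQ : V4 →L[ℝ] ℝ :=
  (ContinuousLinearMap.snd ℝ ℝ ℝ).comp
    ((ContinuousLinearMap.snd ℝ ℝ (ℝ × ℝ)).comp (ContinuousLinearMap.snd ℝ ℝ (ℝ × ℝ × ℝ)))

def dpq (a b : ℝ) : V4 →L[ℝ] ℝ := a • projP + b • projQ

@[simp] lemma dpq_apply (a b : ℝ) (v : V4) : dpq a b v = a * v.2.2.1 + b * v.2.2.2 := rfl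

lemma hasFDerivAt_dpq_of_apply {f : V4 → ℝ} {f' : V4 →L[ℝ] ℝ} {m : V4} {a b : ℝ}
    (hf : HasFDerivAt f f' m) (hf' : ∀ v : V4, f' v = a * v.2.2.1 + b * v.2.2.2) :
    HasFDerivAt f (dpq a b) m :=
  hf.congr_fderiv (ContinuousLinearMap.ext hf')

lemma hasFDerivAt_p (m : V4) : HasFDerivAt (fun m : V4 => m.2.2.1) (dpq 1 0) m :=
  hasFDerivAt_dpq_of_apply projP.hasFDerivAt fun v => by simp [projP]

lemma hasFDerivAt_q (m : V4) : HasFDerivAt (fun m : V4 => m.2.2.2) (dpq 0 1) m :=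
  hasFDerivAt_dpq_of_apply projQ.hasFDerivAt fun v => by simp [projQ]

def HasPQDerivOn (f fp fq : V4 → ℝ) (U : Set V4) : Prop :=
  ∀ m ∈ U, HasFDerivAt f (dpq (fp m) (fq m)) m

namespace HasPQDerivOn

variable {f g fp fq : V4 → ℝ} {U : Set V4} {m : V4}

lemma congr (hg : HasPQDerivOn g fp fq U) (hU : IsOpen U) (hfg : EqOn f g U) :
    HasPQDerivOn f fp fq U := fun m hm =>
  (hg m hm).congr_of_eventuallyEq (hfg.eventuallyEq_of_mem (hU.mem_nhds hm))

lemma pd_eq (hf : HasPQDerivOn f fp fq U) (hm : m ∈ U) (v : V4) :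
    pd v f m = fp m * v.2.2.1 + fq m * v.2.2.2 := by
  rw [pd, (hf m hm).fderiv, dpq_apply]

lemma pd_p_eqOn (hf : HasPQDerivOn f fp fq U) : EqOn (pd ep f) fp U := fun m hm => by
  simp [hf.pd_eq hm, ep]

lemma pd_q_eqOn (hf : HasPQDerivOn f fp fq U) : EqOn (pd eq' f) fq U := fun m hm => by
  simp [hf.pd_eq hm, eq']

lemma pd_y_eq_zero (hf : HasPQDerivOn f fp fq U) (hm : m ∈ U) : pd ey f m = 0 := by
  simp [hf.pd_eq hm, ey]

lemma dtot_eqOn (hf : HasPQDerivOn f fp fq U) (F : V4 → ℝ) :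
    EqOn (Dtot F f) (fun m => m.2.2.2 * fp m + F m * fq m) U := fun m hm => by
  simp [Dtot, hf.pd_eq hm, ex, ey, ep, eq']

end HasPQDerivOn

lemma dtot_congr {F f g : V4 → ℝ} {U : Set V4} {m : V4} (hU : IsOpen U) (hfg : EqOn f g U)
    (hm : m ∈ U) : Dtot F f m = Dtot F g m := by
  simp only [Dtot, pd, (hfg.eventuallyEq_of_mem (hU.mem_nhds hm)).fderiv_eq]

def U : Set V4 := {m | m.2.2.1 ≠ 0 ∧ m.2.2.1 * m.2.2.2 < 1}

lemma isOpen_U : IsOpen U :=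
  (isOpen_compl_singleton.preimage (by fun_prop : Continuous fun m : V4 => m.2.2.1)).inter
    (isOpen_Iio.preimage (by fun_prop : Continuous fun m : V4 => m.2.2.1 * m.2.2.2))

def w (m : V4) : ℝ := (1 + √(1 - m.2.2.1 * m.2.2.2)) / m.2.2.1

def s (m : V4) : ℝ := m.2.2.1 * w m - 1

lemma sqrt_eq_s {m : V4} (hm : m ∈ U) : √(1 - m.2.2.1 * m.2.2.2) = s m := by
  rw [s, w, mul_div_cancel₀ _ hm.1, add_sub_cancel_left]

lemma s_pos {m : V4} (hm : m ∈ U) : 0 < s m := by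
  rw [← sqrt_eq_s hm]
  exact Real.sqrt_pos.2 (by linarith [hm.2])

lemma q_eq {m : V4} (hm : m ∈ U) : m.2.2.2 = 2 * w m - m.2.2.1 * w m ^ 2 := by
  have hsq : (m.2.2.1 * w m - 1) ^ 2 = 1 - m.2.2.1 * m.2.2.2 := by
    rw [← s, ← sqrt_eq_s hm, Real.sq_sqrt (by linarith [hm.2])]
  apply mul_left_cancel₀ hm.1
  linear_combination hsq

lemma hasPQDerivOn_w :
    HasPQDerivOn w (fun m => -w m ^ 2 / (2 * s m)) (fun m => -1 / (2 * s m)) U := by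
  intro m hm
  have hroot := (((hasFDerivAt_p m).fun_mul (hasFDerivAt_q m)).const_sub 1).sqrt
    (by linarith [hm.2])
  refine hasFDerivAt_dpq_of_apply ((hroot.const_add 1).fun_mul ((hasFDerivAt_p m).inv hm.1))
    fun v => ?_
  simp only [add_apply, smul_apply, neg_apply, dpq_apply, smul_eq_mul]
  rw [sqrt_eq_s hm, q_eq hm]
  field_simp [(s_pos hm).ne', hm.1]
  unfold s
  ring

def F : V4 → ℝ := fun m : V4 =>
  (m.2.2.1 * m.2.2.2 *
      (-12 + 3 * m.2.2.1 * m.2.2.2 - 8 * Real.sqrt (1 - m.2.2.1 * m.2.2.2)) +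
    8 * (1 + Real.sqrt (1 - m.2.2.1 * m.2.2.2))) / m.2.2.1^3

lemma F_eqOn : EqOn F (fun m => 3 * m.2.2.1 * w m ^ 4 - 4 * w m ^ 3) U := fun m hm => by
  simp only [F]
  rw [sqrt_eq_s hm, q_eq hm]
  field_simp [hm.1]
  unfold s
  ring

lemma hasPQDerivOn_F : HasPQDerivOn F (fun m => -3 * w m ^ 4) (fun m => -6 * w m ^ 2) U := by
  refine HasPQDerivOn.congr (fun m hm => ?_) isOpen_U F_eqOn
  have hw := hasPQDerivOn_w m hm
  refine hasFDerivAt_dpq_of_apply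
    ((((hasFDerivAt_p m).const_mul 3).fun_mul (hw.pow 4)).sub ((hw.pow 3).const_mul 4))
    fun v => ?_
  simp only [sub_apply, add_apply, smul_apply, dpq_apply, smul_eq_mul, nsmul_eq_mul]
  field_simp [(s_pos hm).ne']
  unfold s
  ring

lemma hasPQDerivOn_Fq :
    HasPQDerivOn (pd eq' F) (fun m => 6 * w m ^ 3 / s m) (fun m => 6 * w m / s m) U := by
  refine HasPQDerivOn.congr (fun m hm => ?_) isOpen_U hasPQDerivOn_F.pd_q_eqOn
  refine hasFDerivAt_dpq_of_apply (((hasPQDerivOn_w m hm).pow 2).const_mul (-6)) fun v => ?_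
  simp only [smul_apply, dpq_apply, smul_eq_mul, nsmul_eq_mul]
  field_simp [(s_pos hm).ne']
  ring

lemma hasPQDerivOn_Fqq :
    HasPQDerivOn (pd eq' (pd eq' F))
      (fun m => 3 * w m ^ 2 * (1 - 2 * s m) / s m ^ 3) (fun m => 3 / s m ^ 3) U := by
  refine HasPQDerivOn.congr (fun m hm => ?_) isOpen_U hasPQDerivOn_Fq.pd_q_eqOn
  have hw := hasPQDerivOn_w m hm
  have hs : HasFDerivAt s _ m := ((hasFDerivAt_p m).fun_mul hw).sub_const 1
  refine hasFDerivAt_dpq_of_apply ((hw.const_mul 6).fun_mul (hs.inv (s_pos hm).ne')) fun v => ?_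
  simp only [add_apply, smul_apply, dpq_apply, smul_eq_mul]
  field_simp [(s_pos hm).ne']
  unfold s
  ring

lemma kf_F_eqOn : EqOn (Kf F) (fun m => -1 / 2 * w m ^ 4) U := fun m hm => by
  simp only [Kf, hasPQDerivOn_Fq.dtot_eqOn F hm, hasPQDerivOn_F.pd_q_eqOn hm,
    hasPQDerivOn_F.pd_p_eqOn hm, F_eqOn hm]
  rw [q_eq hm]
  field_simp [(s_pos hm).ne']
  unfold s
  ring

lemma hasPQDerivOn_kf_F :
    HasPQDerivOn (Kf F) (fun m => w m ^ 5 / s m) (fun m => w m ^ 3 / s m) U := by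
  refine HasPQDerivOn.congr (fun m hm => ?_) isOpen_U kf_F_eqOn
  refine hasFDerivAt_dpq_of_apply (((hasPQDerivOn_w m hm).pow 4).const_mul (-1 / 2)) fun v => ?_
  simp only [smul_apply, dpq_apply, smul_eq_mul, nsmul_eq_mul]
  field_simp [(s_pos hm).ne']
  ring

lemma wu_F_eq_zero {m : V4} (hm : m ∈ U) : Wu F m = 0 := by
  simp only [Wu, hasPQDerivOn_F.pd_y_eq_zero hm, hasPQDerivOn_kf_F.dtot_eqOn F hm,
    hasPQDerivOn_F.pd_q_eqOn hm, kf_F_eqOn hm, F_eqOn hm]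
  rw [q_eq hm]
  field_simp [(s_pos hm).ne']
  unfold s
  ring

lemma dtot_Fqq_eqOn : EqOn (Dtot F (pd eq' (pd eq' F))) (pd ep (pd eq' F)) U := fun m hm => by
  simp only [hasPQDerivOn_Fqq.dtot_eqOn F hm, hasPQDerivOn_Fq.pd_p_eqOn hm, F_eqOn hm]
  rw [q_eq hm]
  field_simp [(s_pos hm).ne']
  unfold s
  ring

lemma cartanG_F_eq_zero {m : V4} (hm : m ∈ U) : CartanG F m = 0 := by
  rw [CartanG, dtot_congr isOpen_U dtot_Fqq_eqOn hm, sub_self, zero_add,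
    hasPQDerivOn_Fq.pd_y_eq_zero hm]

end DKPExample

/-- Example 3 (from the dKP solution `u = √(2x)`): the function
`F = [ p q (−12 + 3 p q − 8 √(1 − p q)) + 8 (1 + √(1 − p q)) ] / p³`
satisfies both the Wuenschmann condition `A ≡ 0` and the Cartan condition `G ≡ 0`
on `U = {p ≠ 0 and p q < 1}`. -/
theorem dkp_example_einstein_weyl :
    ∀ m ∈ {m : V4 | m.2.2.1 ≠ 0 ∧ m.2.2.1 * m.2.2.2 < 1},
      Wu (fun m : V4 =>
          (m.2.2.1 * m.2.2.2 *
              (-12 + 3 * m.2.2.1 * m.2.2.2 - 8 * Real.sqrt (1 - m.2.2.1 * m.2.2.2)) +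
            8 * (1 + Real.sqrt (1 - m.2.2.1 * m.2.2.2))) / m.2.2.1^3) m = 0 ∧
      CartanG (fun m : V4 =>
          (m.2.2.1 * m.2.2.2 *
              (-12 + 3 * m.2.2.1 * m.2.2.2 - 8 * Real.sqrt (1 - m.2.2.1 * m.2.2.2)) +
            8 * (1 + Real.sqrt (1 - m.2.2.1 * m.2.2.2))) / m.2.2.1^3) m = 0 := by
  intro m hm
  exact ⟨DKPExample.wu_F_eq_zero hm, DKPExample.cartanG_F_eq_zero hm⟩
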